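/- In the complete bipartite graph K_{3,t} with parts U = {u₁,u₂,u₃} and W (|W| = t), for any 3-rainbow coloring c with k colors: at most two vertices of W can share the same color code unless the three coordinates of that code are pairwise distinct. In particular, if t > 2k³ then some three vertices of W share a common color code with three pairwise distinct colors. -/

import Mathlib

/-!
A rainbow tree through three vertices `w₁, w₂, w₃ ∈ W` with a common color code `χ` contains,
for each `j`, an edge `aⱼwⱼ` with `aⱼ ∈ U`, since `wⱼ` is not isolated in the tree and all its
neighbours lie in `U`. These three edges are distinct, so their colors `χ(a₁), χ(a₂), χ(a₃)` are
pairwise distinct; as `|U| = 3`, the code `χ` is injective. If `t > 2k³`, pigeonholing `W` into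
the `k³` possible codes produces three vertices with a common code.
-/

open SimpleGraph Finset

variable {V : Type*} {W : Type*}

/-- A rainbow tree in `G` w.r.t. coloring `c` containing `x, y, z`. -/
def SimpleGraph.RainbowTreeFor (G : SimpleGraph V) (c : Sym2 V → ℕ) (x y z : V) : Prop :=
  ∃ T : G.Subgraph, T.coe.IsTree ∧ x ∈ T.verts ∧ y ∈ T.verts ∧ z ∈ T.verts ∧
    Set.InjOn c T.edgeSet

/-- `c` is a 3-rainbow coloring of `G` using colors `< k`. -/
def SimpleGraph.IsRainbow3Coloring (G : SimpleGraph V) (c : Sym2 V → ℕ) (k : ℕ) : Prop :=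
  (∀ e ∈ G.edgeSet, c e < k) ∧ ∀ x y z : V, G.RainbowTreeFor c x y z

/-- The 3-rainbow index of `G`. -/
noncomputable def SimpleGraph.rx3 (G : SimpleGraph V) : ℕ :=
  sInf {k | ∃ c, G.IsRainbow3Coloring c k}

/-- `D` is a `k`-dominating set. -/
def SimpleGraph.IsKDominatingSet (G : SimpleGraph V) (k : ℕ) (D : Set V) : Prop :=
  ∀ v ∉ D, k ≤ (G.neighborSet v ∩ D).ncard

/-- `D` is a connected `k`-dominating set. -/
def SimpleGraph.IsConnectedKDominatingSet (G : SimpleGraph V) (k : ℕ) (D : Set V) : Prop :=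
  G.IsKDominatingSet k D ∧ (G.induce D).Connected

/-- The connected `k`-domination number (`⊤` if no connected `k`-dominating set exists). -/
noncomputable def SimpleGraph.connectedKDominationNum (G : SimpleGraph V) (k : ℕ) : ℕ∞ :=
  sInf {m | ∃ D : Set V, G.IsConnectedKDominatingSet k D ∧ (D.ncard : ℕ∞) = m}

/-- The domination number. -/
noncomputable def SimpleGraph.domNum (G : SimpleGraph V) : ℕ∞ :=
  sInf {m | ∃ D : Set V, G.IsKDominatingSet 1 D ∧ (D.ncard : ℕ∞) = m}

/-- Maximum number of connected components of `G - u` over vertices `u`. -/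
noncomputable def SimpleGraph.qmax [Fintype V] (G : SimpleGraph V) : ℕ :=
  Finset.univ.sup fun u : V => Nat.card (G.induce ({u}ᶜ : Set V)).ConnectedComponent

/-- `G` is 2-connected. -/
def SimpleGraph.TwoConnectedG [Fintype V] (G : SimpleGraph V) : Prop :=
  3 ≤ Fintype.card V ∧ G.Connected ∧ ∀ v : V, (G.induce ({v}ᶜ : Set V)).Connected

/-- `B` is (the vertex set of) a block of `G`: a maximal set inducing a connected
subgraph without cut vertices. -/
def SimpleGraph.IsBlockSet (G : SimpleGraph V) (B : Set V) : Prop :=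
  (G.induce B).Connected ∧
  (∀ v ∈ B, B = {v} ∨ (G.induce (B \ {v})).Connected) ∧
  ∀ B' : Set V, B ⊆ B' →
    ((G.induce B').Connected ∧ ∀ v ∈ B', B' = {v} ∨ (G.induce (B' \ {v})).Connected) →
    B' = B

/-- The induced subgraph on `B` is a cycle. -/
def SimpleGraph.IsCycleSet (G : SimpleGraph V) (B : Set V) : Prop :=
  (G.induce B).Connected ∧ 3 ≤ B.ncard ∧
    ∀ v : B, ((G.induce B).neighborSet v).ncard = 2

/-- `G` has no induced subgraph isomorphic to `H`. -/
def IsInducedSubgraphFree (G : SimpleGraph V) (H : SimpleGraph W) : Prop :=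
  ¬ ∃ f : W ↪ V, ∀ a b : W, G.Adj (f a) (f b) ↔ H.Adj a b

variable {α β : Type*}

def colorCode (c : Sym2 (α ⊕ β) → ℕ) (w : β) : α → ℕ := fun a => c s(Sum.inl a, Sum.inr w)

lemma SimpleGraph.Subgraph.Preconnected.exists_adj_of_ne {V : Type*} {G : SimpleGraph V}
    {H : G.Subgraph} (hH : H.Preconnected) {x y : V} (hx : x ∈ H.verts) (hy : y ∈ H.verts)
    (hxy : x ≠ y) : ∃ v, H.Adj x v :=
  have : Nontrivial H.verts := ⟨⟨x, hx⟩, ⟨y, hy⟩, by simpa using hxy⟩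
  hH.exists_adj_of_nontrivial ⟨x, hx⟩

lemma exists_inl_mem_edgeSet {T : (completeBipartiteGraph α β).Subgraph} (hT : T.Preconnected)
    {w : β} {v : α ⊕ β} (hw : Sum.inr w ∈ T.verts) (hv : v ∈ T.verts) (hne : Sum.inr w ≠ v) :
    ∃ a, s(Sum.inl a, Sum.inr w) ∈ T.edgeSet := by
  obtain ⟨u, hu⟩ := hT.exists_adj_of_ne hw hv hne
  cases u with
  | inl a => exact ⟨a, hu.symm⟩
  | inr w' => simpa using T.adj_sub hu

theorem exists_injective_comp_of_colorCode_eq {ι : Type*} [Nontrivial ι] {c : Sym2 (α ⊕ β) → ℕ}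
    {T : (completeBipartiteGraph α β).Subgraph} (hT : T.Preconnected) (hc : Set.InjOn c T.edgeSet)
    {w : ι → β} (hw : Function.Injective w) (hmem : ∀ i, Sum.inr (w i) ∈ T.verts) {χ : α → ℕ}
    (hcode : ∀ i, colorCode c (w i) = χ) : ∃ a : ι → α, Function.Injective (χ ∘ a) := by
  have hedge : ∀ i, ∃ a, s(Sum.inl a, Sum.inr (w i)) ∈ T.edgeSet := fun i ↦
    have ⟨j, hji⟩ := exists_ne i
    exists_inl_mem_edgeSet hT (hmem i) (hmem j) (by simpa using hw.ne hji.symm)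
  choose a ha using hedge
  have hcolor : ∀ i, c s(Sum.inl (a i), Sum.inr (w i)) = χ (a i) := fun i ↦ congrFun (hcode i) _
  refine ⟨a, fun i j hij ↦ hw ?_⟩
  have hedge_eq := hc (ha i) (ha j) ((hcolor i).trans (hij.trans (hcolor j).symm))
  simp only [Sym2.eq_iff, Sum.inl.injEq, Sum.inr.injEq, reduceCtorEq, and_false, or_false]
    at hedge_eq
  exact hedge_eq.2

lemma exists_three_colorCode_eq [Fintype α] [DecidableEq α] [Fintype β]
    {c : Sym2 (α ⊕ β) → ℕ} {k : ℕ} (hc : ∀ a w, c s(Sum.inl a, Sum.inr w) < k)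
    (h : 2 * k ^ Fintype.card α < Fintype.card β) :
    ∃ w₁ w₂ w₃, w₁ ≠ w₂ ∧ w₁ ≠ w₃ ∧ w₂ ≠ w₃ ∧
      colorCode c w₁ = colorCode c w₂ ∧ colorCode c w₁ = colorCode c w₃ := by
  have hmaps : ∀ w ∈ (univ : Finset β), colorCode c w ∈ Fintype.piFinset fun _ : α ↦ range k := by
    simp [colorCode, hc]
  have hcard : #(Fintype.piFinset fun _ : α ↦ range k) * 2 < #(univ : Finset β) := by
    simpa [mul_comm] using h
  obtain ⟨χ, -, hχ⟩ := exists_lt_card_fiber_of_mul_lt_card_of_maps_to hmaps hcard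
  obtain ⟨w₁, w₂, w₃, h₁, h₂, h₃, h12, h13, h23⟩ := two_lt_card_iff.1 hχ
  simp only [mem_filter, mem_univ, true_and] at h₁ h₂ h₃
  exact ⟨w₁, w₂, w₃, h12, h13, h23, h₁.trans h₂.symm, h₁.trans h₃.symm⟩

theorem stmt4 (t k : ℕ) (c : Sym2 (Fin 3 ⊕ Fin t) → ℕ)
    (hc : (completeBipartiteGraph (Fin 3) (Fin t)).IsRainbow3Coloring c k) :
    (∀ w₁ w₂ w₃ : Fin t, w₁ ≠ w₂ → w₁ ≠ w₃ → w₂ ≠ w₃ →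
      (fun i : Fin 3 => c s(Sum.inl i, Sum.inr w₁)) =
        (fun i : Fin 3 => c s(Sum.inl i, Sum.inr w₂)) →
      (fun i : Fin 3 => c s(Sum.inl i, Sum.inr w₁)) =
        (fun i : Fin 3 => c s(Sum.inl i, Sum.inr w₃)) →
      Function.Injective fun i : Fin 3 => c s(Sum.inl i, Sum.inr w₁)) ∧
    (2 * k ^ 3 < t → ∃ w₁ w₂ w₃ : Fin t, w₁ ≠ w₂ ∧ w₁ ≠ w₃ ∧ w₂ ≠ w₃ ∧
      (fun i : Fin 3 => c s(Sum.inl i, Sum.inr w₁)) =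
        (fun i : Fin 3 => c s(Sum.inl i, Sum.inr w₂)) ∧
      (fun i : Fin 3 => c s(Sum.inl i, Sum.inr w₁)) =
        (fun i : Fin 3 => c s(Sum.inl i, Sum.inr w₃)) ∧
      Function.Injective fun i : Fin 3 => c s(Sum.inl i, Sum.inr w₁)) := by
  have hcode : ∀ w₁ w₂ w₃ : Fin t, w₁ ≠ w₂ → w₁ ≠ w₃ → w₂ ≠ w₃ →
      colorCode c w₁ = colorCode c w₂ → colorCode c w₁ = colorCode c w₃ →
      Function.Injective (colorCode c w₁) := by
    intro w₁ w₂ w₃ h12 h13 h23 e2 e3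
    obtain ⟨T, hT, h₁, h₂, h₃, hinj⟩ := hc.2 (Sum.inr w₁) (Sum.inr w₂) (Sum.inr w₃)
    have hw : Function.Injective ![w₁, w₂, w₃] := by
      simp only [Matrix.vecCons, Fin.cons_injective_iff]
      simp [h12, h13, h23, Function.injective_of_subsingleton]
    obtain ⟨a, ha⟩ := exists_injective_comp_of_colorCode_eq (χ := colorCode c w₁)
      (Subgraph.preconnected_iff.2 hT.connected.preconnected) hinj hw
      (by simp [Fin.forall_fin_succ, *]) (by simp [Fin.forall_fin_succ, ← e2, ← e3])
    exact ha.of_comp_right (Finite.surjective_of_injective ha.of_comp)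
  refine ⟨hcode, fun ht ↦ ?_⟩
  obtain ⟨w₁, w₂, w₃, h12, h13, h23, e2, e3⟩ :=
    exists_three_colorCode_eq (fun a w ↦ hc.1 _ (by simp)) (by simpa using ht)
  exact ⟨w₁, w₂, w₃, h12, h13, h23, e2, e3, hcode w₁ w₂ w₃ h12 h13 h23 e2 e3⟩
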